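/- Let d ≥ 2, let t > 0, let f : [0,t] → ℝ be a continuous convex function, and let ε ∈ [0,t]. Then there exist positive-semidefinite Hermitian d×d complex matrices ρ and σ with tr ρ = tr σ = t such that T(ρ,σ) = ε and |S_f(ρ) − S_f(σ)| = Δ_{t;f;d}(ε); that is, the bound Δ_{t;f;d}(ε) is exact. -/

import Mathlib

/-! The bound is attained by the commuting pair `ρ = diag(t, 0, …, 0)` and
`σ = diag(t - ε, ε/(d-1), …, ε/(d-1))`: their eigenvalues are the diagonal entries, so
`T(ρ, σ) = ε` and `S_f(ρ) - S_f(σ) = -Δ_{t;f;d}(ε)`. Finally `Δ ≥ 0` by convexity, because the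
secant slope of `f` over `[0, ε/(d-1)]` is at most the one over `[t - ε, t]`. -/

open Matrix BigOperators ComplexOrder

section ConvexIncrement

variable {𝕜 : Type*} [Field 𝕜] [LinearOrder 𝕜] [IsStrictOrderedRing 𝕜] {s : Set 𝕜} {f : 𝕜 → 𝕜}

theorem ConvexOn.slope_le_slope (hf : ConvexOn 𝕜 s f) {a b c d : 𝕜} (ha : a ∈ s) (hb : b ∈ s)
    (hc : c ∈ s) (hd : d ∈ s) (hab : a < b) (hcd : c < d) (hac : a ≤ c) (hbd : b ≤ d) :
    slope f a b ≤ slope f c d :=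
  calc slope f a b ≤ slope f a d :=
        hf.slope_mono ha ⟨hb, hab.ne'⟩ ⟨hd, (hab.trans_le hbd).ne'⟩ hbd
    _ = slope f d a := slope_comm f a d
    _ ≤ slope f d c := hf.slope_mono hd ⟨ha, (hab.trans_le hbd).ne⟩ ⟨hc, hcd.ne⟩ hac
    _ = slope f c d := slope_comm f d c

theorem ConvexOn.mul_increment_div_le_increment (hf : ConvexOn 𝕜 s f) {a b h c : 𝕜} (ha : a ∈ s)
    (hbh : b + h ∈ s) (hab : a ≤ b) (hh : 0 ≤ h) (hc : 1 ≤ c) :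
    c * (f (a + h / c) - f a) ≤ f (b + h) - f b := by
  rcases hh.eq_or_lt with rfl | hh
  · simp
  have hc0 : 0 < c := one_pos.trans_le hc
  have hhc : 0 < h / c := div_pos hh hc0
  have hhc_le : h / c ≤ h := div_le_self hh.le hc
  have hmem : ∀ x, a ≤ x → x ≤ b + h → x ∈ s := fun x hax hxb =>
    hf.1.ordConnected.out ha hbh ⟨hax, hxb⟩
  have hslope : slope f a (a + h / c) ≤ slope f b (b + h) :=
    hf.slope_le_slope ha (hmem _ (by linarith) (by linarith)) (hmem _ hab (by linarith)) hbh
      (by linarith) (by linarith) hab (by linarith)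
  have hleft : c * (f (a + h / c) - f a) = h * slope f a (a + h / c) := by
    rw [slope_def_field, add_sub_cancel_left]; field_simp
  have hright : f (b + h) - f b = h * slope f b (b + h) := by
    rw [slope_def_field, add_sub_cancel_left]; field_simp
  rw [hleft, hright]
  exact mul_le_mul_of_nonneg_left hslope hh.le

end ConvexIncrement

section HermitianDiagonal

variable {𝕜 n : Type*} [RCLike 𝕜] [Fintype n] [DecidableEq n]

theorem Matrix.IsHermitian.eigenvalues_multiset_eq_of_eq_diagonal {A : Matrix n n 𝕜}
    (hA : A.IsHermitian) {v : n → ℝ} (h : A = diagonal fun i => (v i : 𝕜)) :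
    Multiset.map hA.eigenvalues Finset.univ.val = Multiset.map v Finset.univ.val := by
  have hroots : A.charpoly.roots = Multiset.map (RCLike.ofReal ∘ v) Finset.univ.val := by
    rw [h, charpoly_diagonal, Polynomial.roots_prod _ _ (Finset.prod_ne_zero_iff.mpr
      fun i _ => Polynomial.X_sub_C_ne_zero _)]
    simp
  rw [hA.roots_charpoly_eq_eigenvalues, ← Multiset.map_map, ← Multiset.map_map] at hroots
  exact Multiset.map_injective RCLike.ofReal_injective hroots

theorem Matrix.IsHermitian.sum_comp_eigenvalues_of_eq_diagonal {A : Matrix n n 𝕜}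
    (hA : A.IsHermitian) {v : n → ℝ} (h : A = diagonal fun i => (v i : 𝕜)) (g : ℝ → ℝ) :
    ∑ i, g (hA.eigenvalues i) = ∑ i, g (v i) := by
  simpa only [Multiset.map_map, Function.comp_def, ← Finset.sum_eq_multiset_sum] using
    congrArg (fun m => (m.map g).sum) (hA.eigenvalues_multiset_eq_of_eq_diagonal h)

end HermitianDiagonal

section ConsConst

variable {n : ℕ}

def consConst (x y : ℝ) : Fin (n + 1) → ℝ := Fin.cons x fun _ => y

theorem sum_comp_consConst (g : ℝ → ℝ) (x y : ℝ) :
    ∑ i, g (consConst (n := n) x y i) = g x + n * g y := by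
  simp [consConst, Fin.sum_univ_succ]

theorem sum_consConst (x y : ℝ) : ∑ i, consConst (n := n) x y i = x + n * y :=
  sum_comp_consConst id x y

theorem consConst_nonneg {x y : ℝ} (hx : 0 ≤ x) (hy : 0 ≤ y) (i : Fin (n + 1)) :
    0 ≤ consConst x y i :=
  Fin.cases hx (fun _ => hy) i

theorem consConst_sub (x y x' y' : ℝ) :
    consConst (n := n) x y - consConst x' y' = consConst (x - x') (y - y') :=
  funext fun i => Fin.cases rfl (fun _ => rfl) i

end ConsConst

theorem posSemidef_diagonal_ofReal {n : Type*} [Fintype n] [DecidableEq n] {v : n → ℝ}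
    (hv : ∀ i, 0 ≤ v i) : (diagonal fun i => (v i : ℂ)).PosSemidef :=
  posSemidef_diagonal_iff.mpr fun i => Complex.zero_le_real.mpr (hv i)

theorem trace_diagonal_ofReal {n : Type*} [Fintype n] [DecidableEq n] (v : n → ℝ) :
    (diagonal fun i => (v i : ℂ)).trace = ((∑ i, v i : ℝ) : ℂ) := by
  rw [trace_diagonal, Complex.ofReal_sum]

theorem fEntropy_bound_exact_trace_t_general (d : ℕ) (hd : 2 ≤ d) (t : ℝ) (ht : 0 < t)
    (f : ℝ → ℝ)
    (hf_conv : ConvexOn ℝ (Set.Icc 0 t) f)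
    (ε : ℝ) (hε : ε ∈ Set.Icc (0 : ℝ) t) :
    ∃ (ρ σ : Matrix (Fin d) (Fin d) ℂ) (hρ : ρ.PosSemidef) (hσ : σ.PosSemidef),
      ρ.trace = (t : ℂ) ∧ σ.trace = (t : ℂ) ∧
      (1/2) * ∑ i, |(hρ.isHermitian.sub hσ.isHermitian).eigenvalues i| = ε ∧
      |(-∑ i, f (hρ.isHermitian.eigenvalues i)) - (-∑ i, f (hσ.isHermitian.eigenvalues i))| =
        f t - f (t - ε) - ((d : ℝ) - 1) * (f (ε / ((d : ℝ) - 1)) - f 0) := by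
  obtain ⟨n, rfl⟩ : ∃ n, d = n + 1 := ⟨d - 1, by omega⟩
  have hn : (1 : ℝ) ≤ n := by exact_mod_cast (by omega : 1 ≤ n)
  have hd_sub : ((n + 1 : ℕ) : ℝ) - 1 = n := by push_cast; ring
  rw [hd_sub]
  obtain ⟨hε0, hεt⟩ := hε
  have hρ := posSemidef_diagonal_ofReal (consConst_nonneg (n := n) ht.le le_rfl)
  have hσ := posSemidef_diagonal_ofReal
    (consConst_nonneg (n := n) (sub_nonneg.2 hεt) (div_nonneg hε0 (by positivity : (0:ℝ) ≤ n)))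
  have hn_div : (n : ℝ) * (ε / n) = ε := mul_div_cancel₀ ε (by positivity)
  have hdiff : diagonal (fun i => (consConst (n := n) t 0 i : ℂ)) -
      diagonal (fun i => (consConst (t - ε) (ε / n) i : ℂ)) =
      diagonal fun i => (consConst (n := n) ε (-(ε / n)) i : ℂ) := by
    rw [diagonal_sub]
    congr 1
    funext i
    rw [← Complex.ofReal_sub, ← Pi.sub_apply, consConst_sub, sub_sub_cancel, zero_sub]
  refine ⟨_, _, hρ, hσ, ?_, ?_, ?_, ?_⟩
  · rw [trace_diagonal_ofReal, sum_consConst]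
    simp
  · rw [trace_diagonal_ofReal, sum_consConst]
    simp [hn_div]
  · rw [(hρ.isHermitian.sub hσ.isHermitian).sum_comp_eigenvalues_of_eq_diagonal
      (v := consConst ε (-(ε / n))) hdiff,
      sum_comp_consConst, abs_neg, abs_of_nonneg hε0, abs_of_nonneg (by positivity), hn_div]
    ring
  · rw [hρ.isHermitian.sum_comp_eigenvalues_of_eq_diagonal (v := consConst t 0) rfl,
      hσ.isHermitian.sum_comp_eigenvalues_of_eq_diagonal (v := consConst (t - ε) (ε / n)) rfl,
      sum_comp_consConst, sum_comp_consConst]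
    have hΔ := hf_conv.mul_increment_div_le_increment (a := 0) (b := t - ε) (h := ε) (c := n)
      ⟨le_rfl, ht.le⟩ (by simpa using ht.le) (by linarith) hε0 hn
    rw [zero_add, sub_add_cancel] at hΔ
    rw [abs_of_nonpos (by linarith)]
    ring

theorem fEntropy_bound_exact_trace_t (d : ℕ) (hd : 2 ≤ d) (t : ℝ) (ht : 0 < t)
    (f : ℝ → ℝ)
    (hf_cont : ContinuousOn f (Set.Icc 0 t))
    (hf_conv : ConvexOn ℝ (Set.Icc 0 t) f)
    (ε : ℝ) (hε : ε ∈ Set.Icc (0 : ℝ) t) :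
    ∃ (ρ σ : Matrix (Fin d) (Fin d) ℂ) (hρ : ρ.PosSemidef) (hσ : σ.PosSemidef),
      ρ.trace = (t : ℂ) ∧ σ.trace = (t : ℂ) ∧
      (1/2) * ∑ i, |(hρ.isHermitian.sub hσ.isHermitian).eigenvalues i| = ε ∧
      |(-∑ i, f (hρ.isHermitian.eigenvalues i)) - (-∑ i, f (hσ.isHermitian.eigenvalues i))| =
        f t - f (t - ε) - ((d : ℝ) - 1) * (f (ε / ((d : ℝ) - 1)) - f 0) :=
  fEntropy_bound_exact_trace_t_general d hd t ht f hf_conv ε hε
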